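/- Define, for an integer n ≥ 2, an integer i with 0 ≤ i ≤ n, and reals t, t' ≥ 0, C_n(i,t,t') := n^{−2}·( (i(i−1)/2)·t + ((n−i)(n−i−1)/2)·t' + (i²+i)/2 − i·H_i + ((n−i)²+(n−i))/2 − (n−i)·H_{n−i} − (n²−n)/2 + n·H_n ), where H_m := ∑_{k=1}^{m} 1/k and H_0 := 0, and define C(x,t,t') := (1/2)x²t + (1/2)(1−x)²t' − x(1−x) for x ∈ [0,1]. Then there exists a constant K > 0 such that for every integer n ≥ 2, all reals t, t' ≥ 0 and every x ∈ [0,1], |C_n(⌈nx⌉, t, t') − C(x,t,t')| ≤ (log n)/n + K·(1 + t + t')/n. -/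

import Mathlib

/-- The `m`-th harmonic number, with `H_0 = 0`. -/
noncomputable def harm (m : ℕ) : ℝ := ∑ k ∈ Finset.Icc 1 m, 1 / (k : ℝ)

/-- The toll function `C_n(i,t,t')` of the recursive approximation of the normalized
continuous cophenetic index of a Yule tree without root edge. -/
noncomputable def Ccont (n i : ℕ) (t t' : ℝ) : ℝ :=
  (((i : ℝ) * ((i : ℝ) - 1) / 2) * t +
      (((n : ℝ) - (i : ℝ)) * ((n : ℝ) - (i : ℝ) - 1) / 2) * t' +
      ((i : ℝ) ^ 2 + (i : ℝ)) / 2 - (i : ℝ) * harm i +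
      (((n : ℝ) - (i : ℝ)) ^ 2 + ((n : ℝ) - (i : ℝ))) / 2 -
      ((n : ℝ) - (i : ℝ)) * harm (n - i) - ((n : ℝ) ^ 2 - (n : ℝ)) / 2 +
      (n : ℝ) * harm n) /
    (n : ℝ) ^ 2

/-!
With `y = n x` and `i = ⌈y⌉`, the numerator of `C_n(i,t,t') - C(x,t,t')` splits as
`((i(i-1) - y²) t + ((n-i)(n-i-1) - (n-y)²) t') / 2 + (y(n-y) - i(n-i)) + n + E`, where
`E = n H_n - i H_i - (n-i) H_{n-i}`. Since `|i - y| ≤ 1`, the first three pieces are `O(n)`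
times `1 + t + t'`, and `0 ≤ E ≤ n` because `m (H_n - H_m) ≤ n - m`. Hence the difference is
at most `3 (1 + t + t') / n`, without using the `log n / n` allowance.
-/

lemma harm_sub_harm {m n : ℕ} (h : m ≤ n) :
    harm n - harm m = ∑ k ∈ Finset.Ioc m n, 1 / (k : ℝ) := by
  have hIcc (k : ℕ) : Finset.Icc 1 k = Finset.Ioc 0 k := Finset.Icc_add_one_left_eq_Ioc 0 k
  rw [harm, harm, hIcc, hIcc, ← Finset.sum_Ioc_consecutive _ (Nat.zero_le m) h,
    add_sub_cancel_left]

lemma harm_le_harm {m n : ℕ} (h : m ≤ n) : harm m ≤ harm n := by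
  rw [← sub_nonneg, harm_sub_harm h]
  positivity

lemma mul_harm_sub_harm_le {m n : ℕ} (h : m ≤ n) : (m : ℝ) * (harm n - harm m) ≤ n - m := by
  have hsum : harm n - harm m ≤ (n - m : ℝ) * (1 / (m + 1)) := by
    rw [harm_sub_harm h, ← Nat.cast_sub h, ← Nat.card_Ioc, ← nsmul_eq_mul]
    refine Finset.sum_le_card_nsmul _ _ _ fun k hk => ?_
    have hk : (m : ℝ) + 1 ≤ k := by exact_mod_cast (Finset.mem_Ioc.mp hk).1
    exact one_div_le_one_div_of_le (by positivity) hk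
  have hnm : (0 : ℝ) ≤ n - m := sub_nonneg.mpr (by exact_mod_cast h)
  calc (m : ℝ) * (harm n - harm m) ≤ m * ((n - m) * (1 / (m + 1))) :=
        mul_le_mul_of_nonneg_left hsum m.cast_nonneg
    _ = (n - m) * (m / (m + 1)) := by ring
    _ ≤ (n - m) * 1 :=
        mul_le_mul_of_nonneg_left ((div_le_one (by positivity)).mpr (by linarith)) hnm
    _ = n - m := mul_one _

lemma harm_defect_mem_Icc {i n : ℕ} (h : i ≤ n) :
    (n : ℝ) * harm n - i * harm i - (n - i) * harm (n - i) ∈ Set.Icc 0 (n : ℝ) := by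
  have hsub := Nat.sub_le n i
  have h₁ := mul_harm_sub_harm_le h
  have h₂ := mul_harm_sub_harm_le hsub
  have h₃ := harm_le_harm h
  have h₄ := harm_le_harm hsub
  rw [Nat.cast_sub h] at h₂
  have hi : (0 : ℝ) ≤ i := i.cast_nonneg
  have hni : (i : ℝ) ≤ n := by exact_mod_cast h
  constructor <;> nlinarith

section

variable {a b n : ℝ}

lemma abs_mul_sub_one_sub_sq_le (ha : 0 ≤ a) (hb : 0 ≤ b) (han : a ≤ n) (hbn : b ≤ n)
    (hab : |a - b| ≤ 1) : |a * (a - 1) - b ^ 2| ≤ 3 * n := by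
  have hprod : |(a - b) * (a + b)| ≤ a + b := by
    rw [abs_mul, abs_of_nonneg (add_nonneg ha hb)]
    exact mul_le_of_le_one_left (add_nonneg ha hb) hab
  rw [abs_le] at hprod ⊢
  constructor <;> nlinarith

lemma abs_mul_sub_sub_mul_sub_le (ha : 0 ≤ a) (hb : 0 ≤ b) (han : a ≤ n) (hbn : b ≤ n)
    (hab : |a - b| ≤ 1) : |b * (n - b) - a * (n - a)| ≤ n := by
  have hfactor : b * (n - b) - a * (n - a) = (b - a) * (n - a - b) := by ring
  have hsum : |n - a - b| ≤ n := abs_le.mpr ⟨by linarith, by linarith⟩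
  rw [hfactor, abs_mul, abs_sub_comm]
  nlinarith [abs_nonneg (n - a - b), abs_nonneg (a - b)]

end

lemma sq_mul_Ccont {n : ℕ} (hn : n ≠ 0) (i : ℕ) (t t' y : ℝ) :
    (n : ℝ) ^ 2 * Ccont n i t t' - (y ^ 2 * t / 2 + (n - y) ^ 2 * t' / 2 - y * (n - y)) =
      ((i * (i - 1) - y ^ 2) * t + ((n - i) * (n - i - 1) - (n - y) ^ 2) * t') / 2 +
        (y * (n - y) - i * (n - i)) + n +
        ((n : ℝ) * harm n - i * harm i - (n - i) * harm (n - i)) := by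
  rw [Ccont, mul_div_cancel₀ _ (by positivity)]
  ring

lemma abs_sq_mul_Ccont_sub_le {n i : ℕ} (hi : i ≤ n) {t t' y : ℝ} (ht : 0 ≤ t) (ht' : 0 ≤ t')
    (hy : y ∈ Set.Icc 0 (n : ℝ)) (hiy : |(i : ℝ) - y| ≤ 1) :
    |(n : ℝ) ^ 2 * Ccont n i t t' - (y ^ 2 * t / 2 + (n - y) ^ 2 * t' / 2 - y * (n - y))| ≤
      3 * n * (1 + t + t') := by
  obtain ⟨hy0, hyn⟩ := hy
  have hin : (i : ℝ) ≤ n := by exact_mod_cast hi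
  rcases Nat.eq_zero_or_pos n with rfl | hn
  · obtain rfl : i = 0 := Nat.le_zero.mp hi
    have : y = 0 := le_antisymm (by simpa using hyn) hy0
    simp [this, Ccont]
  have hleft := abs_mul_sub_one_sub_sq_le i.cast_nonneg hy0 hin hyn hiy
  have hright := abs_mul_sub_one_sub_sq_le (a := (n : ℝ) - i) (b := n - y) (n := n)
    (by linarith) (by linarith) (by linarith) (by linarith)
    (by rwa [show (n : ℝ) - i - (n - y) = -(i - y) by ring, abs_neg])
  have hmid := abs_mul_sub_sub_mul_sub_le i.cast_nonneg hy0 hin hyn hiy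
  have hdefect := harm_defect_mem_Icc hi
  rw [sq_mul_Ccont hn.ne', abs_le]
  rw [abs_le] at hleft hright hmid
  obtain ⟨hl₁, hl₂⟩ := hleft
  obtain ⟨hr₁, hr₂⟩ := hright
  have htl₁ := mul_le_mul_of_nonneg_right hl₁ ht
  have htl₂ := mul_le_mul_of_nonneg_right hl₂ ht
  have htr₁ := mul_le_mul_of_nonneg_right hr₁ ht'
  have htr₂ := mul_le_mul_of_nonneg_right hr₂ ht'
  constructor <;> linarith [hdefect.1, hdefect.2, hmid.1, hmid.2]

/-- Uniform approximation of the continuous toll function `C_n(⌈nx⌉,t,t')` by its limit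
`C(x,t,t') = (1/2)x²t + (1/2)(1−x)²t' − x(1−x)` at rate `log n / n + K(1+t+t')/n`. -/
theorem stmt17 :
    ∃ K : ℝ, 0 < K ∧ ∀ n : ℕ, 2 ≤ n → ∀ t t' : ℝ, 0 ≤ t → 0 ≤ t' →
      ∀ x : ℝ, x ∈ Set.Icc (0 : ℝ) 1 →
        |Ccont n ⌈(n : ℝ) * x⌉₊ t t' -
            ((1 / 2) * x ^ 2 * t + (1 / 2) * (1 - x) ^ 2 * t' - x * (1 - x))| ≤
          Real.log n / n + K * (1 + t + t') / n := by
  refine ⟨3, by norm_num, fun n hn t t' ht ht' x ⟨hx0, hx1⟩ => ?_⟩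
  have hn0 : (0 : ℝ) < n := by positivity
  have hy : (n : ℝ) * x ∈ Set.Icc 0 (n : ℝ) :=
    ⟨by positivity, mul_le_of_le_one_right hn0.le hx1⟩
  have hceil : ⌈(n : ℝ) * x⌉₊ ≤ n := Nat.ceil_le.mpr hy.2
  have hround : |(⌈(n : ℝ) * x⌉₊ : ℝ) - n * x| ≤ 1 :=
    abs_le.mpr ⟨by linarith [Nat.le_ceil ((n : ℝ) * x)],
      by linarith [Nat.ceil_lt_add_one hy.1]⟩
  have hbound := abs_sq_mul_Ccont_sub_le hceil ht ht' hy hround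
  have hscale : (n : ℝ) ^ 2 * Ccont n ⌈(n : ℝ) * x⌉₊ t t' -
      ((n * x) ^ 2 * t / 2 + (n - n * x) ^ 2 * t' / 2 - n * x * (n - n * x)) =
      (n : ℝ) ^ 2 * (Ccont n ⌈(n : ℝ) * x⌉₊ t t' -
        ((1 / 2) * x ^ 2 * t + (1 / 2) * (1 - x) ^ 2 * t' - x * (1 - x))) := by ring
  rw [hscale, abs_mul, abs_of_pos (by positivity)] at hbound
  have hlog : 0 ≤ Real.log n / n :=
    div_nonneg (Real.log_nonneg (by exact_mod_cast hn.trans' one_le_two)) hn0.le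
  calc _ ≤ 3 * (1 + t + t') / n := by
        rw [le_div_iff₀ hn0]; nlinarith
    _ ≤ Real.log n / n + 3 * (1 + t + t') / n := le_add_of_nonneg_left hlog
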